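/- Let (X,d) be a compact metric space and let W ⊆ X be a clopen set. If S₁ and S₂ are both cores of W, then S₁ = S₂; that is, a clopen subset of a compact metric space has at most one core. -/
import Mathlib


/-- `B*(Y,ε)`. -/
def Bstar {X : Type*} [MetricSpace X] (Y : Set X) (ε : ℝ) : Set X :=
  interior Y ∪ Metric.thickening ε (Y \ interior Y)

/-- `S` is a core of the clopen set `W`: `S` is a connected component which is an
arc with endpoints `a`, `b`, the set of its non-endpoints is open in `X`, and
`S ⊆ W ⊆ B*(S, d(a,b)/2)`. -/
def IsCore {X : Type*} [MetricSpace X] (W S : Set X) : Prop :=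
  (∃ x : X, S = connectedComponent x) ∧
  ∃ (a b : X) (h : ↥(Set.Icc (0:ℝ) 1) ≃ₜ ↥S),
    ((h ⟨0, by norm_num⟩ : ↥S) : X) = a ∧
    ((h ⟨1, by norm_num⟩ : ↥S) : X) = b ∧
    IsOpen (S \ {a, b}) ∧
    S ⊆ W ∧ W ⊆ Bstar S (dist a b / 2)


lemma core_aux {X : Type*} [MetricSpace X] {W S₁ S₂ : Set X} {a₁ b₁ a₂ b₂ : X}
    (hfr : S₁ \ interior S₁ ⊆ {a₁, b₁})
    (hcov : W ⊆ Bstar S₁ (dist a₁ b₁ / 2))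
    (hS₂W : S₂ ⊆ W) (hconn : IsPreconnected S₂)
    (ha₂ : a₂ ∈ S₂) (hb₂ : b₂ ∈ S₂)
    (disj : Disjoint S₂ S₁) :
    dist a₂ b₂ < dist a₁ b₁ := by
  set ε := dist a₁ b₁ / 2 with hε
  have hballs : Disjoint (Metric.ball a₁ ε) (Metric.ball b₁ ε) := by
    rw [Set.disjoint_left]
    intro x hx hx'
    rw [Metric.mem_ball] at hx hx'
    have := dist_triangle a₁ x b₁
    rw [dist_comm x a₁] at hx
    linarith
  have hsub : S₂ ⊆ Metric.ball a₁ ε ∪ Metric.ball b₁ ε := by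
    intro x hx
    rcases hcov (hS₂W hx) with h | h
    · exact absurd (interior_subset h) (Set.disjoint_left.mp disj hx)
    · obtain ⟨z, hz, hd⟩ := Metric.mem_thickening_iff.mp h
      rcases hfr hz with rfl | hz'
      · exact Or.inl (Metric.mem_ball.mpr hd)
      · rw [Set.mem_singleton_iff] at hz'
        subst hz'
        exact Or.inr (Metric.mem_ball.mpr hd)
  have key : ∀ c : X, a₂ ∈ Metric.ball c ε → b₂ ∈ Metric.ball c ε →
      dist a₂ b₂ < dist a₁ b₁ := by
    intro c h1 h2
    rw [Metric.mem_ball] at h1 h2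
    have := dist_triangle a₂ c b₂
    rw [dist_comm b₂ c] at h2
    linarith
  rcases hconn.subset_or_subset Metric.isOpen_ball Metric.isOpen_ball hballs hsub with
    h | h
  · exact key a₁ (h ha₂) (h hb₂)
  · exact key b₁ (h ha₂) (h hb₂)

/-- A clopen subset of a compact metric space has at most one core. -/
theorem core_unique {X : Type*} [MetricSpace X] [CompactSpace X]
    (W : Set X) (hW : IsClopen W) (S₁ S₂ : Set X)
    (h₁ : IsCore W S₁) (h₂ : IsCore W S₂) : S₁ = S₂ := by
  by_contra hne
  obtain ⟨⟨x₁, hx₁⟩, a₁, b₁, e₁, ha₁, hb₁, hop₁, hsub₁, hcov₁⟩ := h₁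
  obtain ⟨⟨x₂, hx₂⟩, a₂, b₂, e₂, ha₂, hb₂, hop₂, hsub₂, hcov₂⟩ := h₂
  have hdisj : Disjoint S₁ S₂ := by
    rw [Set.disjoint_left]
    intro z hz₁ hz₂
    apply hne
    rw [hx₁, hx₂]
    rw [hx₁] at hz₁; rw [hx₂] at hz₂
    rw [connectedComponent_eq hz₁, connectedComponent_eq hz₂]
  have hfr : ∀ (S : Set X) (a b : X), IsOpen (S \ {a, b}) →
      S \ interior S ⊆ {a, b} := by
    intro S a b hop x hx
    by_contra hab
    exact hx.2 (interior_maximal Set.diff_subset hop ⟨hx.1, hab⟩)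
  have hmem : ∀ (S : Set X) (e : ↥(Set.Icc (0:ℝ) 1) ≃ₜ ↥S) (t : ↥(Set.Icc (0:ℝ) 1))
      (c : X), ((e t : ↥S) : X) = c → c ∈ S := by
    intro S e t c hc
    rw [← hc]; exact (e t).2
  have hconn₁ : IsPreconnected S₁ := by
    rw [hx₁]; exact isPreconnected_connectedComponent
  have hconn₂ : IsPreconnected S₂ := by
    rw [hx₂]; exact isPreconnected_connectedComponent
  have d1 := core_aux (hfr S₁ a₁ b₁ hop₁) hcov₁ hsub₂ hconn₂
    (hmem S₂ e₂ _ a₂ ha₂) (hmem S₂ e₂ _ b₂ hb₂) hdisj.symm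
  have d2 := core_aux (hfr S₂ a₂ b₂ hop₂) hcov₂ hsub₁ hconn₁
    (hmem S₁ e₁ _ a₁ ha₁) (hmem S₁ e₁ _ b₁ hb₁) hdisj
  linarith
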